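/- arXiv:2401.05693 — 3 statements merged into one kernel-verified Lean document; each statement's English description precedes it below -/
import Mathlib

section
/- For a slowly varying function L and any α < -1 with ∫_x^∞ t^α L(t) dt finite for large x, the ratio (∫_x^∞ t^α L(t) dt)/(x^{α+1} L(x)) → -1/(α+1) as x → ∞. -/
/-!
Substituting `t = x s` turns the ratio into `∫_1^∞ s^α L(xs)/L(x) ds`, whose integrand tends to
`s^α` pointwise, with `∫_1^∞ s^α ds = -1/(α+1)`. Dominated convergence applies thanks to Potter's
bound `L(xs)/L(x) ≤ e^ε s^ε` (for `s ≥ 1` and large `x`) with `α + ε < -1`.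

Potter's bound comes from the uniform convergence theorem for `h(y) = log L(e^y)`: by Egorov, the
increments `h(y+t) - h(y)` are small for `t ∈ [0,2]` outside a set of small measure; two such sets
cannot cover `[1,2]`, so every increment over `[0,1]` is a difference of two small ones. Chaining
such increments gives `h(y+t) - h(y) ≤ ε(t+1)`.
-/

open Filter Real MeasureTheory Set Topology

theorem exists_mem_notMem_and_sub_notMem {G : Type*} [MeasurableSpace G] [AddGroup G]
    [MeasurableAdd G] (μ : Measure G) [μ.IsAddRightInvariant] {s T₁ T₂ : Set G}
    (hT : μ T₁ + μ T₂ < μ s) (u : G) : ∃ t ∈ s, t ∉ T₁ ∧ t - u ∉ T₂ := by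
  by_contra! hcover
  have hs : s ⊆ T₁ ∪ (fun t => t + -u) ⁻¹' T₂ := fun t ht => by
    by_cases h₁ : t ∈ T₁
    · exact Or.inl h₁
    · exact Or.inr (by simpa [sub_eq_add_neg] using hcover t ht h₁)
  have := (measure_mono (μ := μ) hs).trans (measure_union_le _ _)
  rw [measure_preimage_add_right] at this
  exact this.not_gt hT

theorem exists_measure_le_eventually_forall_abs_sub_lt {h : ℝ → ℝ} (hm : Measurable h)
    (hh : ∀ u, Tendsto (fun y => h (y + u) - h y) atTop (𝓝 0))
    {z : ℕ → ℝ} (hz : Tendsto z atTop atTop) {ε δ : ℝ} (hε : 0 < ε) (hδ : 0 < δ) :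
    ∃ T : Set ℝ, volume T ≤ ENNReal.ofReal δ ∧
      ∀ᶠ n in atTop, ∀ t ∈ Icc (0 : ℝ) 2 \ T, |h (z n + t) - h (z n)| < ε := by
  have hmeas : ∀ n, StronglyMeasurable fun t => h (z n + t) - h (z n) := fun n =>
    ((hm.comp (measurable_const_add _)).sub measurable_const).stronglyMeasurable
  obtain ⟨T, -, -, hTμ, hunif⟩ := tendstoUniformlyOn_of_ae_tendsto (μ := volume) hmeas
    stronglyMeasurable_const measurableSet_Icc (by simp [Real.volume_Icc])
    (Eventually.of_forall fun t _ => (hh t).comp hz) hδ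
  refine ⟨T, hTμ, ?_⟩
  filter_upwards [Metric.tendstoUniformlyOn_iff.mp hunif ε hε] with n hn t ht
  simpa [Real.dist_eq, abs_sub_comm] using hn t ht

/-- The uniform convergence theorem, in additive form. -/
theorem eventually_forall_Icc_abs_sub_le {h : ℝ → ℝ} (hm : Measurable h)
    (hh : ∀ u, Tendsto (fun y => h (y + u) - h y) atTop (𝓝 0)) {ε : ℝ} (hε : 0 < ε) :
    ∀ᶠ y in atTop, ∀ u ∈ Icc (0 : ℝ) 1, |h (y + u) - h y| ≤ ε := by
  by_contra hbad
  obtain ⟨y, hy, u, hu, hgt⟩ : ∃ y : ℕ → ℝ, (∀ n : ℕ, (n : ℝ) ≤ y n) ∧ ∃ u : ℕ → ℝ,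
      (∀ n, u n ∈ Icc (0 : ℝ) 1) ∧ ∀ n, ε < |h (y n + u n) - h (y n)| := by
    simp only [eventually_atTop, not_exists, not_forall, not_le] at hbad
    choose y hy u hu hgt using fun n : ℕ => hbad n
    exact ⟨y, hy, u, hu, hgt⟩
  have hy_top : Tendsto y atTop atTop :=
    tendsto_atTop_mono hy tendsto_natCast_atTop_atTop
  have hyu_top : Tendsto (fun n => y n + u n) atTop atTop :=
    tendsto_atTop_mono (fun n => le_add_of_nonneg_right (hu n).1) hy_top
  obtain ⟨T₁, hT₁, hev₁⟩ := exists_measure_le_eventually_forall_abs_sub_lt hm hh hy_top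
    (half_pos hε) (by norm_num : (0 : ℝ) < 1 / 3)
  obtain ⟨T₂, hT₂, hev₂⟩ := exists_measure_le_eventually_forall_abs_sub_lt hm hh hyu_top
    (half_pos hε) (by norm_num : (0 : ℝ) < 1 / 3)
  obtain ⟨n, hn₁, hn₂⟩ := (hev₁.and hev₂).exists
  have hsmall : volume T₁ + volume T₂ < volume (Icc (1 : ℝ) 2) := by
    calc volume T₁ + volume T₂ ≤ ENNReal.ofReal (1 / 3) + ENNReal.ofReal (1 / 3) :=
          add_le_add hT₁ hT₂
      _ < volume (Icc (1 : ℝ) 2) := by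
          rw [Real.volume_Icc, ← ENNReal.ofReal_add (by norm_num) (by norm_num)]
          exact ENNReal.ofReal_lt_ofReal_iff'.mpr (by norm_num)
  obtain ⟨t, ht, htT₁, htT₂⟩ := exists_mem_notMem_and_sub_notMem volume hsmall (u n)
  -- `h (y + u) - h y` is the difference of two increments, over `[y, y + t]` and `[y + u, y + t]`.
  have h₁ := hn₁ t ⟨⟨by linarith [ht.1], ht.2⟩, htT₁⟩
  have h₂ := hn₂ (t - u n) ⟨⟨by linarith [ht.1, (hu n).2], by linarith [ht.2, (hu n).1]⟩, htT₂⟩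
  rw [add_add_sub_cancel] at h₂
  have := abs_sub (h (y n + t) - h (y n)) (h (y n + t) - h (y n + u n))
  rw [sub_sub_sub_cancel_left] at this
  linarith [hgt n]

theorem eventually_forall_sub_le_mul_add_one {h : ℝ → ℝ} (hm : Measurable h)
    (hh : ∀ u, Tendsto (fun y => h (y + u) - h y) atTop (𝓝 0)) {ε : ℝ} (hε : 0 < ε) :
    ∀ᶠ y in atTop, ∀ t ≥ 0, h (y + t) - h y ≤ ε * (t + 1) := by
  obtain ⟨Y, hY⟩ := eventually_atTop.mp (eventually_forall_Icc_abs_sub_le hm hh hε)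
  refine eventually_atTop.mpr ⟨Y, fun y hy => ?_⟩
  have hstep : ∀ y' ≥ y, ∀ u ∈ Icc (0 : ℝ) 1, h (y' + u) - h y' ≤ ε := fun y' hy' u hu =>
    (le_abs_self _).trans (hY y' (hy.trans hy') u hu)
  have hchain : ∀ n : ℕ, ∀ t ∈ Icc (0 : ℝ) n, h (y + t) - h y ≤ n * ε := by
    intro n
    induction n with
    | zero =>
      intro t ht
      simp [le_antisymm (by exact_mod_cast ht.2) ht.1]
    | succ n ih =>
      intro t ht
      push_cast
      rcases le_or_gt t 1 with ht1 | ht1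
      · have := hstep y le_rfl t ⟨ht.1, ht1⟩
        nlinarith [(Nat.cast_nonneg n : (0 : ℝ) ≤ n)]
      · have hprev := ih (t - 1) ⟨by linarith, by push_cast at ht; linarith [ht.2]⟩
        have hlast := hstep (y + (t - 1)) (by linarith) 1 ⟨zero_le_one, le_rfl⟩
        rw [add_assoc, sub_add_cancel] at hlast
        linarith
  intro t ht
  calc h (y + t) - h y ≤ ⌈t⌉₊ * ε := hchain _ t ⟨ht, Nat.le_ceil t⟩
    _ ≤ ε * (t + 1) := by nlinarith [Nat.ceil_lt_add_one ht]

theorem tendsto_log_comp_exp_add_sub {L : ℝ → ℝ} (hpos : ∀ x > (0 : ℝ), 0 < L x)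
    (hsv : ∀ c > (0 : ℝ), Tendsto (fun x => L (c * x) / L x) atTop (𝓝 1)) (u : ℝ) :
    Tendsto (fun y => log (L (exp (y + u))) - log (L (exp y))) atTop (𝓝 0) := by
  have hlim := ((hsv (exp u) (exp_pos u)).comp tendsto_exp_atTop).log one_ne_zero
  rw [log_one] at hlim
  refine hlim.congr fun y => ?_
  simp only [Function.comp_apply]
  rw [log_div (hpos _ (by positivity)).ne' (hpos _ (exp_pos y)).ne', ← exp_add, add_comm]

/-- Potter's bound. -/
theorem eventually_forall_le_exp_mul_rpow_mul {L : ℝ → ℝ} (hmeas : Measurable L)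
    (hpos : ∀ x > (0 : ℝ), 0 < L x)
    (hsv : ∀ c > (0 : ℝ), Tendsto (fun x => L (c * x) / L x) atTop (𝓝 1)) {ε : ℝ} (hε : 0 < ε) :
    ∀ᶠ x in atTop, ∀ s ≥ (1 : ℝ), L (x * s) ≤ exp ε * s ^ ε * L x := by
  have hm : Measurable fun y => log (L (exp y)) :=
    measurable_log.comp (hmeas.comp measurable_exp)
  have hlin := eventually_forall_sub_le_mul_add_one hm (tendsto_log_comp_exp_add_sub hpos hsv) hε
  filter_upwards [tendsto_log_atTop.eventually hlin, eventually_gt_atTop 0] with x hx hx0 s hs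
  have hs0 : 0 < s := one_pos.trans_le hs
  have hbound := hx (log s) (log_nonneg hs)
  rw [← log_mul hx0.ne' hs0.ne', exp_log hx0, exp_log (mul_pos hx0 hs0)] at hbound
  calc L (x * s) = exp (log (L (x * s))) := (exp_log (hpos _ (mul_pos hx0 hs0))).symm
    _ ≤ exp (log (L x) + (ε + log s * ε)) := exp_le_exp.mpr (by linarith)
    _ = exp ε * s ^ ε * L x := by
      rw [exp_add, exp_add, exp_log (hpos x hx0), rpow_def_of_pos hs0]
      ring

theorem integral_Ioi_rpow_mul_eq_rpow_mul_integral_Ioi_one (f : ℝ → ℝ) (α : ℝ) {x : ℝ}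
    (hx : 0 < x) :
    ∫ t in Ioi x, t ^ α * f t = x ^ (α + 1) * ∫ s in Ioi 1, s ^ α * f (x * s) := by
  have hscale := integral_comp_mul_left_Ioi (fun t => t ^ α * f t) 1 hx
  rw [mul_one, smul_eq_mul] at hscale
  have hsplit : ∫ s in Ioi (1 : ℝ), (x * s) ^ α * f (x * s)
      = x ^ α * ∫ s in Ioi (1 : ℝ), s ^ α * f (x * s) := by
    rw [← integral_const_mul]
    refine setIntegral_congr_fun measurableSet_Ioi fun s hs => ?_
    rw [mul_rpow hx.le (one_pos.trans hs).le, mul_assoc]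
  rw [hsplit] at hscale
  rw [rpow_add_one hx.ne', mul_right_comm, hscale, mul_comm, ← mul_assoc, mul_inv_cancel₀ hx.ne',
    one_mul]

theorem tendsto_integral_Ioi_one_rpow_mul_div {L : ℝ → ℝ} (hmeas : Measurable L)
    (hpos : ∀ x > (0 : ℝ), 0 < L x)
    (hsv : ∀ c > (0 : ℝ), Tendsto (fun x => L (c * x) / L x) atTop (𝓝 1)) {α : ℝ}
    (hα : α < -1) :
    Tendsto (fun x => ∫ s in Ioi (1 : ℝ), s ^ α * (L (x * s) / L x)) atTop
      (𝓝 (∫ s in Ioi (1 : ℝ), s ^ α)) := by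
  obtain ⟨ε, hε, hαε⟩ : ∃ ε, 0 < ε ∧ α + ε < -1 := ⟨(-1 - α) / 2, by linarith, by linarith⟩
  refine tendsto_integral_filter_of_dominated_convergence (fun s => exp ε * s ^ (α + ε)) ?_ ?_
    ((integrableOn_Ioi_rpow_of_lt hαε one_pos).const_mul _) ?_
  · exact Eventually.of_forall fun x => ((measurable_id.pow_const α).mul
      ((hmeas.comp (measurable_const_mul x)).div_const _)).aestronglyMeasurable
  · filter_upwards [eventually_forall_le_exp_mul_rpow_mul hmeas hpos hsv hε,
      eventually_gt_atTop 0] with x hpotter hx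
    refine (ae_restrict_iff' measurableSet_Ioi).mpr (Eventually.of_forall fun s hs => ?_)
    have hs0 : 0 < s := one_pos.trans hs
    rw [norm_of_nonneg (by have := hpos _ (mul_pos hx hs0); have := hpos x hx; positivity),
      rpow_add hs0, mul_left_comm]
    exact mul_le_mul_of_nonneg_left ((div_le_iff₀ (hpos x hx)).mpr (hpotter s hs.le))
      (rpow_nonneg hs0.le α)
  · refine (ae_restrict_iff' measurableSet_Ioi).mpr (Eventually.of_forall fun s hs => ?_)
    simpa only [mul_one, mul_comm s] using (hsv s (one_pos.trans hs)).const_mul (s ^ α)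

theorem stmt4_general (L : ℝ → ℝ) (hmeas : Measurable L) (hpos : ∀ x > (0:ℝ), 0 < L x)
    (hsv : ∀ c > (0:ℝ), Tendsto (fun x => L (c * x) / L x) atTop (nhds 1))
    (α : ℝ) (hα : α < -1) :
    Tendsto (fun x => (∫ t in Set.Ioi x, t ^ α * L t) / (x ^ (α + 1) * L x)) atTop
      (nhds (-1 / (α + 1))) := by
  have hlim := tendsto_integral_Ioi_one_rpow_mul_div hmeas hpos hsv hα
  rw [integral_Ioi_rpow_of_lt hα one_pos, one_rpow] at hlim
  refine hlim.congr' ?_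
  filter_upwards [eventually_gt_atTop 0] with x hx
  rw [integral_Ioi_rpow_mul_eq_rpow_mul_integral_Ioi_one L α hx,
    mul_div_mul_left _ _ (rpow_pos_of_pos hx _).ne', ← integral_div]
  simp_rw [mul_div_assoc]

/-- Karamata: for slowly varying L and α < -1 with integrable tails,
(∫_x^∞ t^α L(t) dt)/(x^{α+1} L(x)) → -1/(α+1) as x → ∞. -/
theorem stmt4 (L : ℝ → ℝ) (hmeas : Measurable L) (hpos : ∀ x > (0:ℝ), 0 < L x)
    (hsv : ∀ c > (0:ℝ), Tendsto (fun x => L (c * x) / L x) atTop (nhds 1))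
    (α : ℝ) (hα : α < -1)
    (hint : ∃ x₀ : ℝ, 0 < x₀ ∧ ∀ x ≥ x₀,
      IntegrableOn (fun t => t ^ α * L t) (Set.Ioi x)) :
    Tendsto (fun x => (∫ t in Set.Ioi x, t ^ α * L t) / (x ^ (α + 1) * L x)) atTop
      (nhds (-1 / (α + 1))) :=
  stmt4_general L hmeas hpos hsv α hα
end

section
/- Let L : (0,∞) → (0,∞) satisfy L(t) ≥ c₀ for all t ≥ t₀ (for some c₀ > 0, t₀ > 0). Then for any nonnegative integer y, any α > 0, a > 0, τ > 0, and any fixed constants K₁ > K₀ > max{1, t₀}, one has ∫₀¹ u^{a+α-1} (1-u)^{y-a-1} L((1/τ²)(1/u - 1)) du ≥ (c₀ (K₀^{-a} - K₁^{-a})/a) · (τ²)^{y-a} · (1+K₁τ²)^{-(y+α)}. -/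
/-!
For `u` between `u₁ = (1 + K₁τ²)⁻¹` and `u₀ = (1 + K₀τ²)⁻¹` the argument `(1/u - 1)/τ²`
of `L` exceeds `K₀ > t₀`, so `L ≥ c₀` there, and `u^α (1-u)^y ≥ (τ²)^y (1 + K₁τ²)^{-(y+α)}`.
What is left of the integrand, `u^{a-1} (1-u)^{-a-1}`, is the derivative of
`(u/(1-u))^a / a`, and `u/(1-u) = (Kτ²)⁻¹` at `u = (1 + Kτ²)⁻¹`; integrating over
`(u₁, u₀)` gives the bound.
-/

open MeasureTheory Real Set

theorem hasDerivAt_div_one_sub {u : ℝ} (hu : u ≠ 1) :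
    HasDerivAt (fun v => v / (1 - v)) ((1 - u) ^ 2)⁻¹ u := by
  have h1u : 1 - u ≠ 0 := sub_ne_zero.2 hu.symm
  refine ((hasDerivAt_id u).div ((hasDerivAt_const u 1).sub (hasDerivAt_id u)) h1u).congr_deriv
    ?_
  simp

theorem hasDerivAt_div_one_sub_rpow_div {a u : ℝ} (ha : a ≠ 0) (hu₀ : 0 < u) (hu₁ : u < 1) :
    HasDerivAt (fun v => (v / (1 - v)) ^ a / a) (u ^ (a - 1) * (1 - u) ^ (-a - 1)) u := by
  have h1u : 0 < 1 - u := sub_pos.2 hu₁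
  refine (((hasDerivAt_div_one_sub hu₁.ne).rpow_const (p := a)
    (Or.inl (div_pos hu₀ h1u).ne')).div_const a).congr_deriv ?_
  rw [div_rpow hu₀.le h1u.le, show -a - 1 = -(a - 1) + -2 by ring, rpow_add h1u,
    rpow_neg h1u.le, rpow_neg h1u.le, rpow_two]
  field_simp

theorem continuousOn_rpow_mul_one_sub_rpow (b c : ℝ) :
    ContinuousOn (fun u : ℝ => u ^ b * (1 - u) ^ c) (Ioo 0 1) := by
  refine ContinuousOn.mul ?_ ?_
  · exact continuousOn_id.rpow_const fun u hu => Or.inl hu.1.ne'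
  · exact (continuousOn_const.sub continuousOn_id).rpow_const
      fun u hu => Or.inl (sub_pos.2 hu.2).ne'

theorem integral_rpow_mul_one_sub_rpow {a p q : ℝ} (ha : a ≠ 0) (hp : 0 < p) (hpq : p ≤ q)
    (hq : q < 1) :
    ∫ u in p..q, u ^ (a - 1) * (1 - u) ^ (-a - 1) =
      ((q / (1 - q)) ^ a - (p / (1 - p)) ^ a) / a := by
  have hsub : uIcc p q ⊆ Ioo 0 1 := by
    rw [uIcc_of_le hpq]
    exact Icc_subset_Ioo hp hq
  rw [sub_div]
  refine intervalIntegral.integral_eq_sub_of_hasDerivAt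
    (fun u hu => hasDerivAt_div_one_sub_rpow_div ha (hsub hu).1 (hsub hu).2) ?_
  exact ((continuousOn_rpow_mul_one_sub_rpow _ _).mono hsub).intervalIntegrable

theorem inv_one_add_div_one_sub_inv_one_add {s : ℝ} (hs : 0 < s) :
    (1 + s)⁻¹ / (1 - (1 + s)⁻¹) = s⁻¹ := by
  have h : (1:ℝ) + s ≠ 0 := by positivity
  rw [inv_eq_one_div, one_sub_div h, add_sub_cancel_left, div_div_div_cancel_right₀ h, one_div]

theorem lt_one_div_mul_one_div_sub_one {s K u : ℝ} (hs : 0 < s) (hu : 0 < u)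
    (huK : u < (1 + K * s)⁻¹) :
    K < 1 / s * (1 / u - 1) := by
  rw [lt_inv_comm₀ hu (inv_pos.1 (hu.trans huK))] at huK
  rw [one_div_mul_eq_div, lt_div_iff₀ hs]
  linarith [one_div u]

theorem rpow_mul_one_add_rpow_neg_le {s K₀ K₁ α y u : ℝ} (hs : 0 < s) (hK₀ : 1 ≤ K₀)
    (hK : K₀ ≤ K₁) (hα : 0 ≤ α) (hy : 0 ≤ y) (hu₁ : (1 + K₁ * s)⁻¹ ≤ u)
    (hu₀ : u ≤ (1 + K₀ * s)⁻¹) :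
    s ^ y * (1 + K₁ * s) ^ (-(y + α)) ≤ (1 - u) ^ y * u ^ α := by
  have h₀ : 0 < 1 + K₀ * s := by nlinarith
  have h₁ : 0 < 1 + K₁ * s := by nlinarith
  have hfac : s * (1 + K₁ * s)⁻¹ ≤ 1 - u := by
    calc s * (1 + K₁ * s)⁻¹ ≤ 1 - (1 + K₀ * s)⁻¹ := by
          rw [← div_eq_mul_inv, div_le_iff₀ h₁]
          field_simp
          nlinarith [mul_nonneg hs.le (sub_nonneg.2 hK₀),
            mul_nonneg (mul_nonneg (sq_nonneg s) (by linarith : (0:ℝ) ≤ K₀))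
              (by linarith : (0:ℝ) ≤ K₁ - 1)]
      _ ≤ 1 - u := by linarith
  calc s ^ y * (1 + K₁ * s) ^ (-(y + α))
      = (s * (1 + K₁ * s)⁻¹) ^ y * ((1 + K₁ * s)⁻¹) ^ α := by
        rw [mul_rpow hs.le (inv_nonneg.2 h₁.le), inv_rpow h₁.le, inv_rpow h₁.le, neg_add,
          rpow_add h₁, rpow_neg h₁.le, rpow_neg h₁.le, mul_assoc]
    _ ≤ (1 - u) ^ y * u ^ α := by
        have hs₁ : 0 ≤ s * (1 + K₁ * s)⁻¹ := mul_nonneg hs.le (inv_nonneg.2 h₁.le)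
        gcongr
        exact rpow_nonneg (hs₁.trans hfac) y

theorem mul_rpow_le_integrand {L : ℝ → ℝ} {c₀ s K₀ K₁ α y a u : ℝ} (hc₀ : 0 ≤ c₀)
    (hL : ∀ t > K₀, c₀ ≤ L t) (hs : 0 < s) (hK₀ : 1 ≤ K₀) (hK : K₀ ≤ K₁) (hα : 0 ≤ α)
    (hy : 0 ≤ y) (hu₁ : (1 + K₁ * s)⁻¹ ≤ u) (hu₀ : u < (1 + K₀ * s)⁻¹) :
    c₀ * s ^ y * (1 + K₁ * s) ^ (-(y + α)) * (u ^ (a - 1) * (1 - u) ^ (-a - 1)) ≤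
      u ^ (a + α - 1) * (1 - u) ^ (y - a - 1) * L (1 / s * (1 / u - 1)) := by
  have hu : 0 < u := (inv_pos.2 (by nlinarith)).trans_le hu₁
  have h1u : 0 < 1 - u := by
    have : (1 + K₀ * s)⁻¹ ≤ 1 := inv_le_one_of_one_le₀ (by nlinarith)
    linarith
  have hg : 0 ≤ u ^ (a - 1) * (1 - u) ^ (-a - 1) :=
    mul_nonneg (rpow_nonneg hu.le _) (rpow_nonneg h1u.le _)
  calc c₀ * s ^ y * (1 + K₁ * s) ^ (-(y + α)) * (u ^ (a - 1) * (1 - u) ^ (-a - 1))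
      = c₀ * (s ^ y * (1 + K₁ * s) ^ (-(y + α))) * (u ^ (a - 1) * (1 - u) ^ (-a - 1)) :=
        by ring
    _ ≤ L (1 / s * (1 / u - 1)) * ((1 - u) ^ y * u ^ α) *
          (u ^ (a - 1) * (1 - u) ^ (-a - 1)) := by
        have hLu := hL _ (lt_one_div_mul_one_div_sub_one hs hu hu₀)
        have hw : 0 ≤ s ^ y * (1 + K₁ * s) ^ (-(y + α)) :=
          mul_nonneg (rpow_nonneg hs.le _) (rpow_nonneg (by nlinarith) _)
        refine mul_le_mul_of_nonneg_right (mul_le_mul hLu ?_ hw (hc₀.trans hLu)) hg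
        exact rpow_mul_one_add_rpow_neg_le hs hK₀ hK hα hy hu₁ hu₀.le
    _ = u ^ (a + α - 1) * (1 - u) ^ (y - a - 1) * L (1 / s * (1 / u - 1)) := by
        rw [show a + α - 1 = (a - 1) + α by ring, show y - a - 1 = (-a - 1) + y by ring,
          rpow_add hu, rpow_add h1u]
        ring

theorem ofReal_intervalIntegral_le_setLIntegral {f g : ℝ → ℝ} {p q : ℝ} {s : Set ℝ}
    (hpq : p ≤ q) (hsub : Ioo p q ⊆ s) (hg : IntegrableOn g (Ioo p q))
    (hg₀ : ∀ u ∈ Ioo p q, 0 ≤ g u) (hgf : ∀ u ∈ Ioo p q, g u ≤ f u) :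
    ENNReal.ofReal (∫ u in p..q, g u) ≤ ∫⁻ u in s, ENNReal.ofReal (f u) := by
  rw [intervalIntegral.integral_of_le hpq, integral_Ioc_eq_integral_Ioo,
    ofReal_integral_eq_lintegral_ofReal hg (ae_restrict_of_forall_mem measurableSet_Ioo hg₀)]
  calc ∫⁻ u in Ioo p q, ENNReal.ofReal (g u)
      ≤ ∫⁻ u in Ioo p q, ENNReal.ofReal (f u) :=
        setLIntegral_mono' measurableSet_Ioo fun u hu => ENNReal.ofReal_le_ofReal (hgf u hu)
    _ ≤ ∫⁻ u in s, ENNReal.ofReal (f u) := lintegral_mono_set hsub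

theorem stmt5_general (L : ℝ → ℝ) (c₀ t₀ : ℝ) (hc₀ : 0 < c₀)
    (hL : ∀ t ≥ t₀, c₀ ≤ L t)
    (y : ℕ) (α a τ K₀ K₁ : ℝ) (hα : 0 < α) (ha : 0 < a) (hτ : 0 < τ)
    (hK₀ : max 1 t₀ < K₀) (hK₁ : K₀ < K₁) :
    ENNReal.ofReal (c₀ * (K₀ ^ (-a) - K₁ ^ (-a)) / a * (τ ^ 2) ^ ((y:ℝ) - a) *
        (1 + K₁ * τ ^ 2) ^ (-((y:ℝ) + α))) ≤
    ∫⁻ u in Set.Ioo (0:ℝ) 1,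
      ENNReal.ofReal (u ^ (a + α - 1) * (1 - u) ^ ((y:ℝ) - a - 1) *
        L ((1 / τ ^ 2) * (1 / u - 1))) := by
  obtain ⟨h1K₀, ht₀K₀⟩ := max_lt_iff.1 hK₀
  have hs : 0 < τ ^ 2 := by positivity
  have h₀ : 0 < K₀ * τ ^ 2 := by nlinarith
  have h₁ : 0 < K₁ * τ ^ 2 := by nlinarith
  have hu₁ : 0 < (1 + K₁ * τ ^ 2)⁻¹ := by positivity
  have hu₁₀ : (1 + K₁ * τ ^ 2)⁻¹ ≤ (1 + K₀ * τ ^ 2)⁻¹ := by gcongr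
  have hu₀ : (1 + K₀ * τ ^ 2)⁻¹ < 1 := inv_lt_one_of_one_lt₀ (by linarith)
  set C := c₀ * (τ ^ 2) ^ (y : ℝ) * (1 + K₁ * τ ^ 2) ^ (-((y : ℝ) + α)) with hC_def
  have hC : 0 ≤ C := by
    have := rpow_pos_of_pos (by positivity : 0 < 1 + K₁ * τ ^ 2) (-((y : ℝ) + α))
    positivity
  have hg : ContinuousOn (fun u : ℝ => u ^ (a - 1) * (1 - u) ^ (-a - 1))
      (Icc (1 + K₁ * τ ^ 2)⁻¹ (1 + K₀ * τ ^ 2)⁻¹) :=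
    (continuousOn_rpow_mul_one_sub_rpow _ _).mono (Icc_subset_Ioo hu₁ hu₀)
  calc _ = ENNReal.ofReal (∫ u in (1 + K₁ * τ ^ 2)⁻¹..(1 + K₀ * τ ^ 2)⁻¹,
        C * (u ^ (a - 1) * (1 - u) ^ (-a - 1))) := by
        rw [intervalIntegral.integral_const_mul,
          integral_rpow_mul_one_sub_rpow ha.ne' hu₁ hu₁₀ hu₀,
          inv_one_add_div_one_sub_inv_one_add h₀, inv_one_add_div_one_sub_inv_one_add h₁,
          inv_rpow h₀.le, inv_rpow h₁.le, mul_rpow (by linarith) hs.le,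
          mul_rpow (by linarith) hs.le, rpow_sub hs, rpow_neg (by linarith),
          rpow_neg (by linarith), hC_def]
        congr 1
        field_simp
    _ ≤ _ := by
        refine ofReal_intervalIntegral_le_setLIntegral hu₁₀ (Ioo_subset_Ioo hu₁.le hu₀.le)
          ((hg.integrableOn_Icc.mono_set Ioo_subset_Icc_self).const_mul C)
          (fun u hu => mul_nonneg hC <|
            mul_nonneg (rpow_nonneg (hu₁.trans hu.1).le _) (rpow_nonneg (by linarith [hu.2]) _))
          (fun u hu => mul_rpow_le_integrand hc₀.le (fun t ht => hL t (by linarith)) hs h1K₀.le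
            hK₁.le hα.le (Nat.cast_nonneg y) hu.1.le hu.2)

/-- Lower bound for the normalizing integral of the posterior of κ:
∫₀¹ u^{a+α-1}(1-u)^{y-a-1} L((1/τ²)(1/u-1)) du
  ≥ (c₀(K₀^{-a}-K₁^{-a})/a) (τ²)^{y-a} (1+K₁τ²)^{-(y+α)}. -/
theorem stmt5 (L : ℝ → ℝ) (hmeas : Measurable L) (c₀ t₀ : ℝ) (hc₀ : 0 < c₀)
    (ht₀ : 0 < t₀) (hL : ∀ t ≥ t₀, c₀ ≤ L t)
    (y : ℕ) (α a τ K₀ K₁ : ℝ) (hα : 0 < α) (ha : 0 < a) (hτ : 0 < τ)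
    (hK₀ : max 1 t₀ < K₀) (hK₁ : K₀ < K₁) :
    ENNReal.ofReal (c₀ * (K₀ ^ (-a) - K₁ ^ (-a)) / a * (τ ^ 2) ^ ((y:ℝ) - a) *
        (1 + K₁ * τ ^ 2) ^ (-((y:ℝ) + α))) ≤
    ∫⁻ u in Set.Ioo (0:ℝ) 1,
      ENNReal.ofReal (u ^ (a + α - 1) * (1 - u) ^ ((y:ℝ) - a - 1) *
        L ((1 / τ ^ 2) * (1 / u - 1))) :=
  stmt5_general L c₀ t₀ hc₀ hL y α a τ K₀ K₁ hα ha hτ hK₀ hK₁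
end

section
/- Under the posterior density for κ proportional to κ^{a+α-1}(1-κ)^{y-a-1} L((1/τ²)(1/κ−1)) with τ > 0 fixed and sufficiently small: P(κ > η | y, τ) → 0 as y → ∞, for any fixed η ∈ (0,1). -/
open MeasureTheory Real Filter Set Topology

/-!
Write the integrand as `(1 - u) ^ y * w u`. The substitution `t = (1/τ²)(1/u - 1)` turns the
integrability of `t ^ (-a - 1) * L t` on `(0, ∞)` into that of `w` on `(0, 1)`, so the numerator is
at most `(1 - η) ^ y ∫ |w|`. For `u ≤ β = η δ₁` the argument of `L` is at least `t₀`, so `w ≥ 0` on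
`(0, β]` and `w` is bounded below by a positive constant on `(β/2, 3β/4)`; splitting the
denominator at `β` bounds it below by `c (1 - 3β/4) ^ y - (1 - β) ^ y ∫ |w|`. Since
`1 - η < 1 - β < 1 - 3β/4`, the ratio decays geometrically.
-/

lemma tendsto_div_of_geometric_bounds {N D : ℕ → ℝ} {A B C r s ρ : ℝ} (hB : 0 < B)
    (hr : 0 ≤ r) (hrρ : r < ρ) (hs : 0 ≤ s) (hsρ : s < ρ)
    (hN : ∀ n, |N n| ≤ r ^ n * A) (hD : ∀ n, ρ ^ n * B - s ^ n * C ≤ D n) :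
    Tendsto (fun n => N n / D n) atTop (𝓝 0) := by
  have hρ : 0 < ρ := hr.trans_lt hrρ
  have hgeom {x : ℝ} (hx : 0 ≤ x) (hxρ : x < ρ) : Tendsto (fun n : ℕ => (x / ρ) ^ n) atTop (𝓝 0) :=
    tendsto_pow_atTop_nhds_zero_of_lt_one (div_nonneg hx hρ.le) ((div_lt_one hρ).2 hxρ)
  have hsmall : ∀ᶠ n in atTop, C * (s / ρ) ^ n < B / 2 := by
    have := (hgeom hs hsρ).const_mul C
    rw [mul_zero] at this
    exact this.eventually (gt_mem_nhds (half_pos hB))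
  refine squeeze_zero_norm' ?_ (by simpa using (hgeom hr hrρ).const_mul (2 * A / B))
  filter_upwards [hsmall] with n hn
  have hρn : 0 < ρ ^ n := pow_pos hρ n
  have hDn : B / 2 * ρ ^ n ≤ D n := by
    rw [div_pow, ← mul_div_assoc, div_lt_iff₀ hρn] at hn
    linarith [hD n]
  have hA : 0 ≤ r ^ n * A := (abs_nonneg _).trans (hN n)
  have hDpos : 0 < D n := (by positivity : 0 < B / 2 * ρ ^ n).trans_le hDn
  rw [norm_div, Real.norm_eq_abs, Real.norm_eq_abs, abs_of_pos hDpos]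
  calc |N n| / D n ≤ r ^ n * A / (B / 2 * ρ ^ n) := div_le_div₀ hA (hN n) (by positivity) hDn
    _ = 2 * A / B * (r / ρ) ^ n := by rw [div_pow]; field_simp

section OneSubPow

variable {w : ℝ → ℝ}

lemma integrableOn_one_sub_pow_mul (hw : IntegrableOn w (Ioo 0 1)) (n : ℕ) :
    IntegrableOn (fun u => (1 - u) ^ n * w u) (Ioo 0 1) := by
  refine hw.bdd_mul (c := 1) (by fun_prop) ?_
  filter_upwards [ae_restrict_mem measurableSet_Ioo] with u hu
  rw [norm_pow, Real.norm_eq_abs, abs_of_pos (sub_pos.2 hu.2)]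
  exact pow_le_one₀ (sub_pos.2 hu.2).le (by linarith [hu.1])

lemma abs_setIntegral_one_sub_pow_mul_le {s : ℝ} (hw : IntegrableOn w (Ioo s 1)) (n : ℕ) :
    |∫ u in Ioo s 1, (1 - u) ^ n * w u| ≤ (1 - s) ^ n * ∫ u in Ioo s 1, |w u| := by
  rw [← integral_const_mul, ← Real.norm_eq_abs]
  refine norm_integral_le_of_norm_le (hw.abs.const_mul ((1 - s) ^ n)) ?_
  filter_upwards [ae_restrict_mem measurableSet_Ioo] with u hu
  rw [norm_mul, norm_pow, Real.norm_eq_abs, Real.norm_eq_abs, abs_of_pos (sub_pos.2 hu.2)]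
  gcongr <;> linarith [hu.1, hu.2]

lemma setIntegral_one_sub_pow_mul_ge {β p q c : ℝ} (hp : 0 < p) (hpq : p < q) (hqβ : q ≤ β)
    (hβ : β < 1) (hw : IntegrableOn w (Ioo 0 1)) (hw0 : ∀ u ∈ Ioc 0 β, 0 ≤ w u)
    (hwc : ∀ u ∈ Ioo p q, c ≤ w u) (n : ℕ) :
    (1 - q) ^ n * (c * (q - p)) - (1 - β) ^ n * ∫ u in Ioo β 1, |w u| ≤
      ∫ u in Ioo 0 1, (1 - u) ^ n * w u := by
  have hβ0 : 0 < β := hp.trans (hpq.trans_le hqβ)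
  have hint := integrableOn_one_sub_pow_mul hw n
  have hlow : ∀ u ∈ Ioc 0 β, 0 ≤ (1 - u) ^ n * w u := fun u hu =>
    mul_nonneg (pow_nonneg (by linarith [hu.2]) n) (hw0 u hu)
  have hsub : Ioo p q ⊆ Ioc 0 β := fun u hu => ⟨hp.trans hu.1, hu.2.le.trans hqβ⟩
  have hmid : (1 - q) ^ n * (c * (q - p)) ≤ ∫ u in Ioo p q, (1 - u) ^ n * w u := by
    have := setIntegral_ge_of_const_le_real (c := (1 - q) ^ n * c) measurableSet_Ioo
      measure_Ioo_lt_top.ne ?_ (hint.mono_set (hsub.trans (Ioc_subset_Ioo_right hβ)))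
    · rw [Real.volume_real_Ioo_of_le hpq.le] at this
      linarith
    intro u hu
    calc (1 - q) ^ n * c ≤ (1 - q) ^ n * w u := by
          gcongr
          · exact pow_nonneg (by linarith) n
          · exact hwc u hu
      _ ≤ (1 - u) ^ n * w u := by
          gcongr
          · exact hw0 u (hsub hu)
          · linarith
          · linarith [hu.2]
  have hleft : ∫ u in Ioo p q, (1 - u) ^ n * w u ≤ ∫ u in Ioc 0 β, (1 - u) ^ n * w u :=
    setIntegral_mono_set (hint.mono_set (Ioc_subset_Ioo_right hβ))
      ((ae_restrict_mem measurableSet_Ioc).mono hlow) hsub.eventuallyLE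
  have hright := neg_abs_le (∫ u in Ioo β 1, (1 - u) ^ n * w u)
  have htail := abs_setIntegral_one_sub_pow_mul_le (hw.mono_set (Ioo_subset_Ioo_left hβ0.le)) n
  rw [← Ioc_union_Ioo_eq_Ioo hβ0.le hβ, setIntegral_union
    (Ioc_disjoint_Ioi_same.mono_right Ioo_subset_Ioi_self) measurableSet_Ioo
    (hint.mono_set (Ioc_subset_Ioo_right hβ)) (hint.mono_set (Ioo_subset_Ioo_left hβ0.le))]
  linarith

end OneSubPow

lemma integrableOn_rpow_mul_comp_inv_sub_one {F : ℝ → ℝ} {a c : ℝ} (hc : 0 < c)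
    (hF : IntegrableOn (fun t => t ^ (-a - 1) * F t) (Ioi 0)) :
    IntegrableOn (fun u => u ^ (a - 1) * (1 - u) ^ (-a - 1) * F (c * (1 / u - 1))) (Ioo 0 1) := by
  set φ : ℝ → ℝ := fun u => c * (1 / u - 1)
  have hφ_pos : ∀ u ∈ Ioo (0 : ℝ) 1, 0 < φ u := fun u hu =>
    mul_pos hc (sub_pos.2 ((one_lt_div hu.1).2 hu.2))
  have hderiv : ∀ u ∈ Ioo (0 : ℝ) 1, HasDerivWithinAt φ (c * -(u ^ 2)⁻¹) (Ioo 0 1) u := by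
    intro u hu
    simpa [φ, one_div] using
      (((hasDerivAt_inv hu.1.ne').sub_const 1).const_mul c).hasDerivWithinAt
  have hinj : InjOn φ (Ioo 0 1) := by
    intro x hx z hz hxz
    have : x⁻¹ = z⁻¹ := by simpa [φ, hc.ne'] using hxz
    exact inv_injective this
  have hchg := (integrableOn_image_iff_integrableOn_abs_deriv_smul measurableSet_Ioo
    hderiv hinj fun t => t ^ (-a - 1) * F t).mp
    (hF.mono_set (image_subset_iff.2 fun u hu => hφ_pos u hu))
  refine IntegrableOn.congr_fun (hchg.const_mul (c ^ a)) (fun u hu => ?_) measurableSet_Ioo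
  have hu0 : 0 < u := hu.1
  have h1u : 0 < 1 - u := sub_pos.2 hu.2
  have hφ : φ u = c * (1 - u) / u := by simp only [φ]; field_simp
  have hcu : c ^ a * (|c * -(u ^ 2)⁻¹| * (c * (1 - u) / u) ^ (-a - 1)) =
      u ^ (a - 1) * (1 - u) ^ (-a - 1) := by
    rw [abs_of_neg (mul_neg_of_pos_of_neg hc (neg_neg_of_pos (by positivity))),
      div_rpow (by positivity) hu0.le, mul_rpow hc.le h1u.le, rpow_sub_one hc.ne',
      rpow_sub_one hu0.ne', rpow_sub_one hu0.ne', rpow_neg hc.le, rpow_neg hu0.le]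
    field_simp
  change _ = _ * _ * F (φ u)
  simp only [smul_eq_mul, hφ, ← hcu]
  ring

/-- The posterior density of `κ = u` given `y` is proportional to
`(1 - u) ^ y * posteriorWeight L a α τ u`. -/
noncomputable def posteriorWeight (L : ℝ → ℝ) (a α τ u : ℝ) : ℝ :=
  u ^ (a + α - 1) * (1 - u) ^ (-a - 1) * L (1 / τ ^ 2 * (1 / u - 1))

section PosteriorWeight

variable {L : ℝ → ℝ} {a α τ : ℝ}

lemma integrableOn_posteriorWeight (hα : 0 ≤ α) (hτ : τ ≠ 0)
    (hint : IntegrableOn (fun t => t ^ (-a - 1) * L t) (Ioi 0)) :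
    IntegrableOn (posteriorWeight L a α τ) (Ioo 0 1) := by
  have hv := integrableOn_rpow_mul_comp_inv_sub_one (c := 1 / τ ^ 2) (by positivity) hint
  refine IntegrableOn.congr_fun (hv.bdd_mul (c := 1) (f := fun u => u ^ α) (by fun_prop) ?_)
    (fun u hu => ?_) measurableSet_Ioo
  · filter_upwards [ae_restrict_mem measurableSet_Ioo] with u hu
    rw [Real.norm_eq_abs, abs_of_nonneg (rpow_nonneg hu.1.le α)]
    exact rpow_le_one hu.1.le hu.2.le hα
  · rw [posteriorWeight, show a + α - 1 = α + (a - 1) by ring, rpow_add hu.1]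
    ring

lemma posteriorWeight_eq {n : ℕ} {u : ℝ} (hu : u < 1) :
    u ^ (a + α - 1) * (1 - u) ^ ((n : ℝ) - a - 1) * L (1 / τ ^ 2 * (1 / u - 1)) =
      (1 - u) ^ n * posteriorWeight L a α τ u := by
  rw [posteriorWeight, show (n : ℝ) - a - 1 = n + (-a - 1) by ring, rpow_add (sub_pos.2 hu),
    rpow_natCast]
  ring

lemma setIntegral_eq_setIntegral_one_sub_pow_mul_posteriorWeight (n : ℕ) (s : ℝ) :
    ∫ u in Ioo s 1, u ^ (a + α - 1) * (1 - u) ^ ((n : ℝ) - a - 1) * L (1 / τ ^ 2 * (1 / u - 1)) =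
      ∫ u in Ioo s 1, (1 - u) ^ n * posteriorWeight L a α τ u :=
  setIntegral_congr_fun measurableSet_Ioo fun _ hu => posteriorWeight_eq hu.2

lemma posteriorWeight_nonneg {u : ℝ} (hu : u ∈ Ioo 0 1) (hL : 0 ≤ L (1 / τ ^ 2 * (1 / u - 1))) :
    0 ≤ posteriorWeight L a α τ u :=
  mul_nonneg (mul_nonneg (rpow_nonneg hu.1.le _) (rpow_nonneg (sub_pos.2 hu.2).le _)) hL

lemma rpow_mul_le_posteriorWeight {p u c₀ : ℝ} (ha : 0 ≤ a) (hα : 0 ≤ α) (hp : 0 < p)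
    (hpu : p ≤ u) (hu : u < 1) (hc₀ : 0 ≤ c₀) (hL : c₀ ≤ L (1 / τ ^ 2 * (1 / u - 1))) :
    p ^ (a + α) * c₀ ≤ posteriorWeight L a α τ u := by
  have hu0 : 0 < u := hp.trans_le hpu
  have hpow : p ^ (a + α) ≤ u ^ (a + α - 1) :=
    (rpow_le_rpow hp.le hpu (by linarith)).trans
      (rpow_le_rpow_of_exponent_ge hu0 hu.le (by linarith))
  have hone : 1 ≤ (1 - u) ^ (-a - 1) :=
    one_le_rpow_of_pos_of_le_one_of_nonpos (sub_pos.2 hu) (by linarith) (by linarith)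
  calc p ^ (a + α) * c₀ = p ^ (a + α) * 1 * c₀ := by ring
    _ ≤ posteriorWeight L a α τ u := by
      unfold posteriorWeight
      gcongr

end PosteriorWeight

theorem stmt10_general (L : ℝ → ℝ) (c₀ t₀ : ℝ)
    (hc₀ : 0 < c₀) (hLlow : ∀ t ≥ t₀, c₀ ≤ L t)
    (a α : ℝ) (ha : 0 < a) (hα : 0 < α)
    (hint : IntegrableOn (fun t => t ^ (-a - 1) * L t) (Set.Ioi (0:ℝ)))
    (η : ℝ) (hη : η ∈ Set.Ioo (0:ℝ) 1)
    (τ : ℝ) (hτ : 0 < τ)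
    (hτsmall : ∃ δ₁ ∈ Set.Ioo (0:ℝ) 1, t₀ ≤ (1 / τ ^ 2) * (1 / (η * δ₁) - 1)) :
    Filter.Tendsto (fun y : ℕ =>
      (∫ u in Set.Ioo η 1,
          u ^ (a + α - 1) * (1 - u) ^ ((y:ℝ) - a - 1) * L ((1 / τ ^ 2) * (1 / u - 1))) /
        (∫ u in Set.Ioo (0:ℝ) 1,
          u ^ (a + α - 1) * (1 - u) ^ ((y:ℝ) - a - 1) * L ((1 / τ ^ 2) * (1 / u - 1))))
      Filter.atTop (nhds 0) := by
  obtain ⟨δ₁, hδ₁, ht₀β⟩ := hτsmall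
  set β := η * δ₁
  have hβ0 : 0 < β := mul_pos hη.1 hδ₁.1
  have hβη : β < η := mul_lt_of_lt_one_right hη.1 hδ₁.2
  have hβ1 : β < 1 := hβη.trans hη.2
  have hw : IntegrableOn (posteriorWeight L a α τ) (Ioo 0 1) :=
    integrableOn_posteriorWeight hα.le hτ.ne' hint
  have hL : ∀ u ∈ Ioc 0 β, c₀ ≤ L (1 / τ ^ 2 * (1 / u - 1)) := fun u hu =>
    hLlow _ (ht₀β.trans (by gcongr; exacts [hu.1, hu.2]))
  have hw0 : ∀ u ∈ Ioc 0 β, 0 ≤ posteriorWeight L a α τ u := fun u hu =>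
    posteriorWeight_nonneg ⟨hu.1, hu.2.trans_lt hβ1⟩ (hc₀.le.trans (hL u hu))
  have hwc : ∀ u ∈ Ioo (β / 2) (3 * β / 4), (β / 2) ^ (a + α) * c₀ ≤ posteriorWeight L a α τ u :=
    fun u hu => rpow_mul_le_posteriorWeight ha.le hα.le (half_pos hβ0) hu.1.le (by linarith [hu.2])
      hc₀.le (hL u ⟨by linarith [hu.1], by linarith [hu.2]⟩)
  simp only [setIntegral_eq_setIntegral_one_sub_pow_mul_posteriorWeight]
  refine tendsto_div_of_geometric_bounds (r := 1 - η) (s := 1 - β) (ρ := 1 - 3 * β / 4)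
    (mul_pos (mul_pos (rpow_pos_of_pos (half_pos hβ0) _) hc₀) (by linarith))
    (by linarith [hη.2]) (by linarith) (by linarith) (by linarith)
    (abs_setIntegral_one_sub_pow_mul_le (hw.mono_set (Ioo_subset_Ioo_left hη.1.le)))
    (setIntegral_one_sub_pow_mul_ge (half_pos hβ0) (by linarith) (by linarith) hβ1 hw hw0 hwc)

/-- P(κ > η | y, τ) → 0 as y → ∞, for fixed η ∈ (0,1) and any sufficiently small τ > 0. -/
theorem stmt10 (L : ℝ → ℝ) (hmeas : Measurable L) (c₀ t₀ : ℝ)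
    (hc₀ : 0 < c₀) (ht₀ : 0 < t₀) (hLlow : ∀ t ≥ t₀, c₀ ≤ L t)
    (hKfin : IntegrableOn (fun t => t ^ (-(1:ℝ) - 1) * L t) (Set.Ioi (0:ℝ)))
    (a α : ℝ) (ha : 0 < a) (hα : 0 < α)
    (hint : IntegrableOn (fun t => t ^ (-a - 1) * L t) (Set.Ioi (0:ℝ)))
    (η : ℝ) (hη : η ∈ Set.Ioo (0:ℝ) 1)
    (τ : ℝ) (hτ : 0 < τ)
    (hτsmall : ∃ δ₁ ∈ Set.Ioo (0:ℝ) 1, t₀ ≤ (1 / τ ^ 2) * (1 / (η * δ₁) - 1)) :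
    Filter.Tendsto (fun y : ℕ =>
      (∫ u in Set.Ioo η 1,
          u ^ (a + α - 1) * (1 - u) ^ ((y:ℝ) - a - 1) * L ((1 / τ ^ 2) * (1 / u - 1))) /
        (∫ u in Set.Ioo (0:ℝ) 1,
          u ^ (a + α - 1) * (1 - u) ^ ((y:ℝ) - a - 1) * L ((1 / τ ^ 2) * (1 / u - 1))))
      Filter.atTop (nhds 0) :=
  stmt10_general L c₀ t₀ hc₀ hLlow a α ha hα hint η hη τ hτ hτsmall
end
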